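/- The Tsallis score is a proper scoring rule: for γ > 1 and probability densities p, q with q^γ, p^γ, pq^{γ-1} integrable, (γ-1)∫q^γ dμ - γ∫ p q^{γ-1} dμ ≥ (γ-1)∫p^γ dμ - γ∫ p^γ dμ = -∫ p^γ dμ, i.e. S(p;q) ≥ S(p;p), with equality iff p = q a.e. -/
import Mathlib

open MeasureTheory Set

private lemma self_mul_rpow_sub_one {a γ : ℝ} (ha : 0 ≤ a) (hγ : 1 < γ) :
    a * a ^ (γ - 1) = a ^ γ := by
  have h := Real.rpow_add' ha (show (1 : ℝ) + (γ - 1) ≠ 0 by intro h; linarith)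
  rw [Real.rpow_one] at h
  rw [← h]; norm_num

private lemma tangent_lt {γ a b : ℝ} (hγ : 1 < γ) (ha : 0 ≤ a) (hb : 0 ≤ b)
    (hab : a ≠ b) : γ * (a * b ^ (γ - 1)) < a ^ γ + (γ - 1) * b ^ γ := by
  have hbb := self_mul_rpow_sub_one hb hγ
  have hconv := strictConvexOn_rpow hγ
  have hderb : HasDerivAt (fun x : ℝ => x ^ γ) (γ * b ^ (γ - 1)) b :=
    Real.hasDerivAt_rpow_const (Or.inr hγ.le)
  rcases lt_or_gt_of_ne hab with h | h
  · -- a < b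
    have := hconv.slope_lt_of_hasDerivAt (mem_Ici.2 ha) (mem_Ici.2 hb) h hderb
    rw [slope_def_field, div_lt_iff₀ (by linarith)] at this
    nlinarith [this, hbb]
  · -- b < a
    have := hconv.lt_slope_of_hasDerivAt (mem_Ici.2 hb) (mem_Ici.2 ha) h hderb
    rw [slope_def_field, lt_div_iff₀ (by linarith)] at this
    nlinarith [this, hbb]

private lemma tangent_le {γ a b : ℝ} (hγ : 1 < γ) (ha : 0 ≤ a) (hb : 0 ≤ b) :
    γ * (a * b ^ (γ - 1)) ≤ a ^ γ + (γ - 1) * b ^ γ := by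
  rcases eq_or_ne a b with rfl | hab
  · rw [self_mul_rpow_sub_one ha hγ]; nlinarith [Real.rpow_nonneg ha γ]
  · exact (tangent_lt hγ ha hb hab).le

/-- The Tsallis score is a strictly proper scoring rule: with expected score
`S(p;q) = (γ-1)∫q^γ - γ∫ p q^(γ-1)`, one has `S(p;q) ≥ S(p;p) = -∫p^γ`,
with equality iff `p = q` a.e. -/
theorem tsallis_score_proper {X : Type*} [MeasurableSpace X] (μ : Measure X)
    (γ : ℝ) (hγ : 1 < γ) (p q : X → ℝ)
    (hpm : Measurable p) (hqm : Measurable q)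
    (hp0 : ∀ x, 0 ≤ p x) (hq0 : ∀ x, 0 ≤ q x)
    (hp1 : ∫ x, p x ∂μ = 1) (hq1 : ∫ x, q x ∂μ = 1)
    (hqγ : Integrable (fun x => q x ^ γ) μ)
    (hpγ : Integrable (fun x => p x ^ γ) μ)
    (hpq : Integrable (fun x => p x * q x ^ (γ - 1)) μ) :
    ((γ - 1) * ∫ x, p x ^ γ ∂μ - γ * ∫ x, p x ^ γ ∂μ = -∫ x, p x ^ γ ∂μ) ∧
    ((γ - 1) * ∫ x, q x ^ γ ∂μ - γ * ∫ x, p x * q x ^ (γ - 1) ∂μ ≥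
      (γ - 1) * ∫ x, p x ^ γ ∂μ - γ * ∫ x, p x ^ γ ∂μ) ∧
    (((γ - 1) * ∫ x, q x ^ γ ∂μ - γ * ∫ x, p x * q x ^ (γ - 1) ∂μ =
      -∫ x, p x ^ γ ∂μ) ↔ p =ᵐ[μ] q) := by
  set g : X → ℝ := fun x => p x ^ γ + (γ - 1) * q x ^ γ - γ * (p x * q x ^ (γ - 1)) with hg
  have hg0 : ∀ x, 0 ≤ g x := fun x => by
    have := tangent_le hγ (hp0 x) (hq0 x) (γ := γ)
    simp only [hg]; linarith
  have h1 : Integrable (fun x => p x ^ γ + (γ - 1) * q x ^ γ) μ :=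
    hpγ.add (hqγ.const_mul _)
  have h2 : Integrable (fun x => γ * (p x * q x ^ (γ - 1))) μ := hpq.const_mul _
  have hgint : Integrable g μ := h1.sub h2
  have hgI : ∫ x, g x ∂μ =
      (∫ x, p x ^ γ ∂μ) + (γ - 1) * (∫ x, q x ^ γ ∂μ)
        - γ * (∫ x, p x * q x ^ (γ - 1) ∂μ) := by
    simp only [hg]
    rw [integral_sub h1 h2, integral_add hpγ (hqγ.const_mul _),
      integral_const_mul, integral_const_mul]
  have hIneq : 0 ≤ ∫ x, g x ∂μ := integral_nonneg hg0
  refine ⟨by ring, by rw [hgI] at hIneq; linarith [hIneq], ?_⟩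
  constructor
  · intro h
    have hgzero : ∫ x, g x ∂μ = 0 := by rw [hgI]; linarith
    have := (integral_eq_zero_iff_of_nonneg hg0 hgint).1 hgzero
    filter_upwards [this] with x hx
    by_contra hne
    have := tangent_lt hγ (hp0 x) (hq0 x) hne
    simp only [hg, Pi.zero_apply] at hx
    linarith
  · intro h
    have hae : (fun x => p x * q x ^ (γ - 1)) =ᵐ[μ] (fun x => p x ^ γ) := by
      filter_upwards [h] with x hx
      rw [hx, self_mul_rpow_sub_one (hq0 x) hγ]
    have h2 : (fun x => q x ^ γ) =ᵐ[μ] (fun x => p x ^ γ) := by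
      filter_upwards [h] with x hx; rw [hx]
    rw [integral_congr_ae hae, integral_congr_ae h2]; ring
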